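/- arXiv:2103.09139 — 8 statements merged into one kernel-verified Lean document; each statement's English description precedes it below -/
import Mathlib

section
/- For every integer k ≥ 2 and every integer n ≥ 2k−2, every [k,n,1]-graph has a factor of independent transversals. (That is, f(k) ≤ 2k−2.) -/
/-- A `[k,n,1]`-graph: the vertex set is `Fin k × Fin n`, partitioned into the `k` parts
`V_i = {i} × Fin n` (each of size `n`); there are no edges inside any part, and every
vertex has at most one neighbor in each part (the bipartite graph induced by any pair of
parts is a matching). -/
def IsKN1Graph {k n : ℕ} (G : SimpleGraph (Fin k × Fin n)) : Prop :=
  (∀ u v : Fin k × Fin n, G.Adj u v → u.1 ≠ v.1) ∧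
  (∀ u v w : Fin k × Fin n, G.Adj u v → G.Adj u w → v.1 = w.1 → v = w)

/-- An independent transversal, given by choosing the vertex `(i, f i)` in part `V_i`:
the chosen vertices form an independent set. -/
def IsIndepTransversal {k n : ℕ} (G : SimpleGraph (Fin k × Fin n)) (f : Fin k → Fin n) : Prop :=
  ∀ i j : Fin k, ¬ G.Adj (i, f i) (j, f j)

/-- A factor of independent transversals: `n` pairwise-disjoint independent transversals
(hence covering all vertices). Disjointness is expressed by saying that for each part `i`,
the `n` vertices chosen in `V_i` by the `n` transversals are pairwise distinct. -/
def HasITFactor {k n : ℕ} (G : SimpleGraph (Fin k × Fin n)) : Prop :=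
  ∃ T : Fin n → Fin k → Fin n,
    (∀ m : Fin n, IsIndepTransversal G (T m)) ∧
    (∀ i : Fin k, Function.Injective fun m : Fin n => T m i)

/-!
Colour each part by a bijection onto `n` colours so that adjacent vertices get distinct colours;
the colour classes are then `n` disjoint independent transversals. The parts are coloured one at
a time: a vertex of the new part has at most `k - 1` neighbours, and a colour class, being a
transversal, has at most `k - 1` neighbours in the new part. So in the bipartite graph of allowed
(vertex, colour) pairs all degrees are at least `n - (k - 1) ≥ k - 1`, and Hall's theorem gives a
perfect matching.
-/

open Finset

theorem exists_equiv_forall_apply_notMem {α β : Type*} [Fintype α] [Fintype β] [DecidableEq β]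
    (forb : α → Finset β) (d : ℕ) (hcard : Fintype.card α = Fintype.card β)
    (hd : 2 * d ≤ Fintype.card α) (hforb_card : ∀ a, #(forb a) ≤ d)
    (hforb_fiber : ∀ b, #{a | b ∈ forb a} ≤ d) :
    ∃ σ : α ≃ β, ∀ a, σ a ∉ forb a := by
  have hall : ∀ s : Finset α, #s ≤ #(s.biUnion fun a => (forb a)ᶜ) := by
    intro s
    obtain rfl | ⟨a₀, ha₀⟩ := s.eq_empty_or_nonempty
    · simp
    by_cases hs : #s ≤ Fintype.card β - d
    · calc #s ≤ Fintype.card β - d := hs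
        _ ≤ #(forb a₀)ᶜ := by rw [card_compl]; have := hforb_card a₀; omega
        _ ≤ _ := card_le_card (subset_biUnion_of_mem (fun a => (forb a)ᶜ) ha₀)
    · -- `#s > card β - d ≥ d`, so no `b` is forbidden at every element of `s`
      have hcover : s.biUnion (fun a => (forb a)ᶜ) = univ := by
        refine eq_univ_of_forall fun b => ?_
        by_contra hb
        have hsub : s ⊆ ({a | b ∈ forb a} : Finset α) := fun a ha => by
          by_contra hba
          exact hb (mem_biUnion.2 ⟨a, ha, by simpa using hba⟩)
        have := (card_le_card hsub).trans (hforb_fiber b)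
        omega
      rw [hcover, card_univ, ← hcard]
      exact card_le_univ s
  obtain ⟨f, hf, hf_forb⟩ := (all_card_le_biUnion_card_iff_exists_injective _).1 hall
  exact ⟨Equiv.ofBijective f ((Fintype.bijective_iff_injective_and_card f).2 ⟨hf, hcard⟩),
    fun a => mem_compl.1 (hf_forb a)⟩

section KN1Graph

variable {k n : ℕ} {G : SimpleGraph (Fin k × Fin n)}

theorem IsKN1Graph.degree_le [DecidableRel G.Adj] (hG : IsKN1Graph G) (u : Fin k × Fin n) :
    G.degree u ≤ k - 1 := by
  calc G.degree u ≤ #(univ.erase u.1) := by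
        refine card_le_card_of_injOn Prod.fst (fun v hv => ?_) fun v hv w hw hvw => ?_
        · exact mem_erase.2 ⟨(hG.1 u v (by simpa using hv)).symm, mem_univ _⟩
        · exact hG.2 u v w (by simpa using hv) (by simpa using hw) hvw
    _ = k - 1 := by simp

theorem IsKN1Graph.card_adj_transversal_le [DecidableRel G.Adj] (hG : IsKN1Graph G)
    (g : Fin k → Fin n) (t : Fin k) : #{x | ∃ j, G.Adj (t, x) (j, g j)} ≤ k - 1 := by
  calc #{x | ∃ j, G.Adj (t, x) (j, g j)}
      ≤ #((univ.erase t).biUnion fun j => {x | G.Adj (t, x) (j, g j)}) := by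
        refine card_le_card fun x hx => ?_
        obtain ⟨j, hj⟩ := (mem_filter.1 hx).2
        exact mem_biUnion.2 ⟨j, mem_erase.2 ⟨(hG.1 _ _ hj).symm, mem_univ _⟩, by simpa using hj⟩
    _ ≤ ∑ j ∈ univ.erase t, #{x | G.Adj (t, x) (j, g j)} := card_biUnion_le
    _ ≤ ∑ _j ∈ univ.erase t, 1 := by
        refine sum_le_sum fun j _ => card_le_one.2 fun a ha b hb => ?_
        simp only [mem_filter, mem_univ, true_and] at ha hb
        exact congrArg Prod.snd (hG.2 _ _ _ ha.symm hb.symm rfl)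
    _ = k - 1 := by simp

/-- Part `i` is coloured by the bijection `c i`; the colour class of `m` is the transversal
`i ↦ (i, (c i).symm m)`. -/
def IsProperColoringOn (G : SimpleGraph (Fin k × Fin n)) (c : Fin k → Equiv.Perm (Fin n))
    (s : Finset (Fin k)) : Prop :=
  ∀ i ∈ s, ∀ j ∈ s, ∀ x y, G.Adj (i, x) (j, y) → c i x ≠ c j y

theorem IsProperColoringOn.exists_insert (hG : IsKN1Graph G) (hn : 2 * k - 2 ≤ n)
    {c : Fin k → Equiv.Perm (Fin n)} {s : Finset (Fin k)} (hc : IsProperColoringOn G c s)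
    (t : Fin k) : ∃ c', IsProperColoringOn G c' (insert t s) := by
  classical
  let forb : Fin n → Finset (Fin n) := fun x => {m | ∃ j, G.Adj (t, x) (j, (c j).symm m)}
  have mem_forb : ∀ x j y, G.Adj (t, x) (j, y) → c j y ∈ forb x := fun x j y h => by
    simpa [forb] using ⟨j, by simpa using h⟩
  have card_forb : ∀ x, #(forb x) ≤ k - 1 := fun x => by
    calc #(forb x) ≤ #((G.neighborFinset (t, x)).image fun p => c p.1 p.2) := by
          refine card_le_card fun m hm => ?_
          obtain ⟨j, hj⟩ := (mem_filter.1 hm).2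
          exact mem_image.2 ⟨(j, (c j).symm m), by simpa using hj, by simp⟩
      _ ≤ G.degree (t, x) := card_image_le
      _ ≤ k - 1 := hG.degree_le _
  obtain ⟨σ, hσ⟩ := exists_equiv_forall_apply_notMem forb (k - 1) rfl (by rw [Fintype.card_fin]; omega) card_forb
    fun m => by simpa [forb] using hG.card_adj_transversal_le (fun j => (c j).symm m) t
  have hσc : ∀ x j y, G.Adj (t, x) (j, y) → σ x ≠ c j y := fun x j y h he =>
    hσ x (he ▸ mem_forb x j y h)
  refine ⟨Function.update c t σ, fun i hi j hj x y hadj => ?_⟩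
  by_cases hit : i = t <;> by_cases hjt : j = t
  · exact (hG.1 _ _ hadj (hit.trans hjt.symm)).elim
  · rw [hit] at hadj ⊢
    simpa [hjt] using hσc x j y hadj
  · rw [hjt] at hadj ⊢
    simpa [hit] using (hσc y i x hadj.symm).symm
  · simpa [hit, hjt] using
      hc i (mem_of_mem_insert_of_ne hi hit) j (mem_of_mem_insert_of_ne hj hjt) x y hadj

theorem exists_isProperColoringOn (hG : IsKN1Graph G) (hn : 2 * k - 2 ≤ n)
    (s : Finset (Fin k)) : ∃ c, IsProperColoringOn G c s := by
  classical
  induction s using Finset.induction_on with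
  | empty => exact ⟨1, by simp [IsProperColoringOn]⟩
  | insert t s _ ih =>
    obtain ⟨c, hc⟩ := ih
    exact hc.exists_insert hG hn t

end KN1Graph

theorem stmt_4_general (k n : ℕ) (hn : 2 * k - 2 ≤ n)
    (G : SimpleGraph (Fin k × Fin n)) (hG : IsKN1Graph G) :
    HasITFactor G := by
  obtain ⟨c, hc⟩ := exists_isProperColoringOn hG hn univ
  refine ⟨fun m i => (c i).symm m, fun m i j hadj => ?_, fun i => (c i).symm.injective⟩
  exact hc i (mem_univ _) j (mem_univ _) _ _ hadj (by simp)

/-- For every `k ≥ 2` and every `n ≥ 2k − 2`, every `[k,n,1]`-graph has a factor of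
independent transversals (`f(k) ≤ 2k − 2`). -/
theorem stmt_4 (k n : ℕ) (hk : 2 ≤ k) (hn : 2 * k - 2 ≤ n)
    (G : SimpleGraph (Fin k × Fin n)) (hG : IsKN1Graph G) :
    HasITFactor G :=
  stmt_4_general k n hn G hG
end

section
/- For every integer k ≥ 2 there exists a [k,k−1,1]-graph that has no factor of independent transversals. (That is, f(k) ≥ k.) In fact, the [k,k−1,1]-graph with parts V_i = {v_{i,1},…,v_{i,k−1}} whose edges are v_{i,1}v_{j,1} for all 1 ≤ i < j ≤ k has no factor of independent transversals. -/
/-- For every `k ≥ 2`, the `[k,k−1,1]`-graph whose edges are `v_{i,1} v_{j,1}` for all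
`1 ≤ i < j ≤ k` (in our 0-indexed model: all edges between vertices of the form `(i, 0)`
in distinct parts) is indeed a `[k,k−1,1]`-graph and has no factor of independent
transversals. In particular `f(k) ≥ k`. -/
theorem stmt_5 (k : ℕ) (hk : 2 ≤ k) :
    IsKN1Graph
      (SimpleGraph.fromRel fun u v : Fin k × Fin (k - 1) => u.2.val = 0 ∧ v.2.val = 0) ∧
    ¬ HasITFactor
      (SimpleGraph.fromRel fun u v : Fin k × Fin (k - 1) => u.2.val = 0 ∧ v.2.val = 0) := by

  constructor
  · constructor
    · rintro u v ⟨hne, h | h⟩ h1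
      · exact hne (Prod.ext h1 (Fin.ext (h.1.trans h.2.symm)))
      · exact hne (Prod.ext h1 (Fin.ext (h.2.trans h.1.symm)))
    · rintro u v w ⟨hne1, h1⟩ ⟨hne2, h2⟩ heq
      have hv : v.2.val = 0 := by rcases h1 with h | h <;> [exact h.2; exact h.1]
      have hw : w.2.val = 0 := by rcases h2 with h | h <;> [exact h.2; exact h.1]
      exact Prod.ext heq (Fin.ext (hv.trans hw.symm))
  · rintro ⟨T, hT, hinj⟩
    -- each part's zero vertex must be hit by some transversal
    have hzero : ∀ i : Fin k, ∃ m : Fin (k-1), (T m i).val = 0 := by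
      intro i
      have hsurj : Function.Surjective fun m : Fin (k-1) => T m i :=
        Finite.surjective_of_injective (hinj i)
      obtain ⟨m, hm⟩ := hsurj ⟨0, by omega⟩
      exact ⟨m, by simp [hm]⟩
    choose g hg using hzero
    have hginj : Function.Injective g := by
      intro i j hij
      by_contra hne
      have hne' : (i, T (g i) i) ≠ (j, T (g i) j) := by
        intro h; exact hne (congrArg Prod.fst h)
      exact hT (g i) i j ⟨hne', Or.inl ⟨hg i, by rw [hij]; exact hg j⟩⟩
    have := Fintype.card_le_of_injective g hginj
    simp [Fintype.card_fin] at this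
    omega
end

section
/- For every odd integer k ≥ 3 there exists a [k,k,1]-graph that has no factor of independent transversals. In fact, the [k,k,1]-graph with parts V_i = {v_{i,1},…,v_{i,k}} whose edges are v_{i,t}v_{j,t} for all 1 ≤ i < j ≤ k and 1 ≤ t ≤ k−2, together with v_{i,k−1}v_{j,k} and v_{i,k}v_{j,k−1} for all 1 ≤ i < j ≤ k, does not admit k pairwise-disjoint independent transversals. (That is, f(k) ≥ k+1 for odd k ≥ 3.) -/
/-!
In an independent transversal of Catlin's graph no two vertices share a row `t < k - 2`, so at
most `k - 2` parts use those rows and at least two use one of the top rows `k - 2`, `k - 1`. A factor covers each top row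
exactly `k` times, `2k` in total over `k` transversals, so every transversal uses the top rows
exactly twice. Since `(i, k - 2)` and `(j, k - 1)` are adjacent, both of these vertices lie in the
same top row. Hence every transversal meets row `k - 2` an even number of times, while the factor
must cover its `k` vertices, and `k` is odd.
-/

open Finset Function

lemma Finset.sum_card_filter_of_bijective {α ι β : Type*} [Fintype α] [Fintype ι] [Fintype β]
    {T : α → ι → β} (hT : ∀ i, Bijective fun a => T a i) (p : β → Prop) [DecidablePred p] :
    ∑ a, #{i | p (T a i)} = Fintype.card ι * #{b | p b} := calc
  ∑ a, #{i | p (T a i)} = ∑ i, #{a | p (T a i)} := by simp only [card_filter]; exact sum_comm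
  _ = ∑ _i : ι, #{b | p b} := sum_congr rfl fun i _ => card_bijective _ (hT i) (by simp)
  _ = Fintype.card ι * #{b | p b} := by simp

lemma Fin.card_filter_sub_two_le_val {n : ℕ} (hn : 2 ≤ n) : #{t : Fin n | n - 2 ≤ t.val} = 2 := by
  have := card_filter_add_card_filter_not (s := univ) fun t : Fin n => t.val < n - 2
  simp only [card_univ, Fintype.card_fin, not_lt, Fin.card_filter_val_lt] at this
  omega

lemma Fin.card_filter_val_eq {n m : ℕ} (hm : m < n) : #{t : Fin n | t.val = m} = 1 :=
  card_eq_one.mpr ⟨⟨m, hm⟩, by ext; simp [Fin.ext_iff]⟩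

/-- Parts are `Fin k`, rows are `Fin n`, 0-indexed: the paper's two exceptional rows are
`n - 2` and `n - 1` here. -/
def catlinGraph (k n : ℕ) : SimpleGraph (Fin k × Fin n) :=
  SimpleGraph.fromRel fun u v =>
    u.1 ≠ v.1 ∧ ((u.2 = v.2 ∧ u.2.val < n - 2) ∨ (u.2.val = n - 2 ∧ v.2.val = n - 1))

section Catlin

variable {k n : ℕ}

lemma catlinGraph_adj {i j : Fin k} {a b : Fin n} :
    (catlinGraph k n).Adj (i, a) (j, b) ↔ i ≠ j ∧ ((a = b ∧ a.val < n - 2) ∨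
      (a.val = n - 2 ∧ b.val = n - 1) ∨ (b.val = n - 2 ∧ a.val = n - 1)) := by
  simp only [catlinGraph, SimpleGraph.fromRel_adj]
  grind

lemma isKN1Graph_catlinGraph : IsKN1Graph (catlinGraph k n) := by
  refine ⟨fun _ _ h => (catlinGraph_adj.mp h).1, ?_⟩
  rintro ⟨i, a⟩ ⟨j, b⟩ ⟨j', c⟩ hb hc (rfl : j = j')
  rw [catlinGraph_adj] at hb hc
  simp only [Prod.mk.injEq, true_and, Fin.ext_iff] at hb hc ⊢
  omega

namespace IsIndepTransversal

variable {f : Fin k → Fin n}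

lemma catlin_injOn_low (hf : IsIndepTransversal (catlinGraph k n) f) :
    Set.InjOn f {i | (f i).val < n - 2} := by
  intro i hi j _ hij
  by_contra hne
  exact hf i j (catlinGraph_adj.mpr ⟨hne, Or.inl ⟨hij, hi⟩⟩)

lemma catlin_eq_of_top (hf : IsIndepTransversal (catlinGraph k n) f) {i j : Fin k}
    (hi : n - 2 ≤ (f i).val) (hj : n - 2 ≤ (f j).val) : f i = f j := by
  by_contra hne
  have hij : i ≠ j := fun h => hne (congrArg f h)
  have := (f i).isLt
  have := (f j).isLt
  refine hf i j (catlinGraph_adj.mpr ⟨hij, Or.inr ?_⟩)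
  have := Fin.val_ne_of_ne hne
  omega

lemma le_sub_two_add_card_catlin_top (hf : IsIndepTransversal (catlinGraph k n) f) :
    k ≤ n - 2 + #{i | n - 2 ≤ (f i).val} := by
  have hlow : #{i | (f i).val < n - 2} ≤ n - 2 := by
    calc #{i | (f i).val < n - 2}
        ≤ #{t : Fin n | t.val < n - 2} :=
          card_le_card_of_injOn f (fun i hi => by simpa using hi)
            (by simpa using hf.catlin_injOn_low)
      _ = n - 2 := by rw [Fin.card_filter_val_lt]; omega
  have := card_filter_add_card_filter_not (s := univ) fun i => (f i).val < n - 2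
  simp only [card_univ, Fintype.card_fin, not_lt] at this
  omega

lemma card_catlin_sub_two_eq_zero_or (hf : IsIndepTransversal (catlinGraph k n) f) :
    #{i | (f i).val = n - 2} = 0 ∨ #{i | (f i).val = n - 2} = #{i | n - 2 ≤ (f i).val} := by
  rcases eq_empty_or_nonempty (univ.filter fun i => (f i).val = n - 2) with h | ⟨i, hi⟩
  · exact Or.inl (by rw [h, card_empty])
  · refine Or.inr (congrArg card (filter_congr fun j _ => ⟨fun hj => hj.ge, fun hj => ?_⟩))
    simp only [mem_filter, mem_univ, true_and] at hi
    rw [hf.catlin_eq_of_top hj hi.ge, hi]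

end IsIndepTransversal

end Catlin

/-- Catlin's construction: for every odd `k ≥ 3`, the `[k,k,1]`-graph whose edges are
`v_{i,t} v_{j,t}` for all `1 ≤ i < j ≤ k` and `1 ≤ t ≤ k−2`, together with
`v_{i,k−1} v_{j,k}` and `v_{i,k} v_{j,k−1}` for all `1 ≤ i < j ≤ k`
(in our 0-indexed model: edges between `(i, t)` and `(j, t)` for `i ≠ j` and `t < k−2`,
and between `(i, k−2)` and `(j, k−1)` for `i ≠ j`), is indeed a `[k,k,1]`-graph and
does not admit `k` pairwise-disjoint independent transversals. Hence `f(k) ≥ k+1`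
for odd `k ≥ 3`. -/
theorem stmt_6 (k : ℕ) (hk : 3 ≤ k) (hodd : Odd k) :
    IsKN1Graph
      (SimpleGraph.fromRel fun u v : Fin k × Fin k =>
        u.1 ≠ v.1 ∧ ((u.2 = v.2 ∧ u.2.val < k - 2) ∨ (u.2.val = k - 2 ∧ v.2.val = k - 1))) ∧
    ¬ HasITFactor
      (SimpleGraph.fromRel fun u v : Fin k × Fin k =>
        u.1 ≠ v.1 ∧ ((u.2 = v.2 ∧ u.2.val < k - 2) ∨ (u.2.val = k - 2 ∧ v.2.val = k - 1))) := by
  change IsKN1Graph (catlinGraph k k) ∧ ¬ HasITFactor (catlinGraph k k)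
  refine ⟨isKN1Graph_catlinGraph, ?_⟩
  rintro ⟨T, hIT, hInj⟩
  have hbij i : Bijective fun m => T m i := Finite.injective_iff_bijective.mp (hInj i)
  have htop_sum := sum_card_filter_of_bijective hbij fun t => k - 2 ≤ t.val
  have hrow_sum := sum_card_filter_of_bijective hbij fun t => t.val = k - 2
  rw [Fin.card_filter_sub_two_le_val (by omega), Fintype.card_fin] at htop_sum
  rw [Fin.card_filter_val_eq (by omega), Fintype.card_fin, mul_one] at hrow_sum
  have htop m : #{i | k - 2 ≤ (T m i).val} = 2 := by
    have hle : ∀ m ∈ univ, 2 ≤ #{i | k - 2 ≤ (T m i).val} := fun m _ => by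
      have := (hIT m).le_sub_two_add_card_catlin_top
      omega
    refine ((sum_eq_sum_iff_of_le hle).mp ?_ m (mem_univ m)).symm
    rw [htop_sum, sum_const, card_univ, Fintype.card_fin, smul_eq_mul, mul_comm]
  have hrow_even : Even (∑ m, #{i | (T m i).val = k - 2}) := even_sum _ fun m _ => by
    rcases (hIT m).card_catlin_sub_two_eq_zero_or with h | h
    · rw [h]; exact .zero
    · rw [h, htop m]; exact even_two
  exact Nat.not_even_iff_odd.mpr hodd (hrow_sum ▸ hrow_even)
end

section
/- Every [3,n,1]-graph with n ≥ 4 has a factor of independent transversals, and there exists a [3,3,1]-graph with no factor of independent transversals. (That is, f(3) = 4.) -/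
/-!
Parts are filled in one at a time. Once the vertices of the `n` transversals in a set `S` of
parts are fixed, their vertices in a new part are given by a permutation of `Fin n`, and each
row and each column of that permutation has at most `#S` forbidden entries (one neighbour per
part of `S`). By Hall's theorem such a permutation exists as soon as `2 * #S ≤ n`, so every
`[k,n,1]`-graph with `2 * (k - 1) ≤ n` has a factor; for `k = 3` this is `n ≥ 4`.

For `n = 3`, join parts 0–1 and 0–2 by identity matchings and parts 1–2 by the transposition
`τ = (1 2)`. Relative to part 0, the choices `q`, `r` of a factor in parts 1 and 2 would be
derangements of `Fin 3`, i.e. 3-cycles, with `r⁻¹ ∘ τ ∘ q` again a derangement; but that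
permutation is odd.
-/

open Finset

theorem Equiv.Perm.exists_forall_not_of_card_le {α : Type*} [Fintype α] [DecidableEq α] {d : ℕ}
    (hd : 2 * d ≤ Fintype.card α) (F : α → α → Prop) [DecidableRel F]
    (hrow : ∀ a, #{b | F a b} ≤ d) (hcol : ∀ b, #{a | F a b} ≤ d) :
    ∃ σ : Equiv.Perm α, ∀ a, ¬ F a (σ a) := by
  set allowed : α → Finset α := fun a => {b | ¬ F a b}
  have hall : ∀ s : Finset α, #s ≤ #(s.biUnion allowed) := by
    intro s
    by_cases hs : #s + d ≤ Fintype.card α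
    · rcases s.eq_empty_or_nonempty with rfl | ⟨a, ha⟩
      · simp
      have hcompl : #{b | F a b} + #(allowed a) = Fintype.card α :=
        card_filter_add_card_filter_not _
      have := hrow a
      have := card_le_card (subset_biUnion_of_mem allowed ha)
      omega
    · -- `s` has more than `d` elements, so every column has an allowed entry in some row of `s`
      have hcover : s.biUnion allowed = univ := by
        refine eq_univ_of_forall fun b => ?_
        have : 0 < #(s \ ({a | F a b} : Finset α)) := by
          have := le_card_sdiff {a | F a b} s
          have := hcol b
          omega
        obtain ⟨a, ha⟩ := card_pos.mp this
        rw [mem_sdiff] at ha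
        exact mem_biUnion.mpr ⟨a, ha.1, by simpa [allowed] using ha.2⟩
      rw [hcover, card_univ]
      exact card_le_univ s
  obtain ⟨f, hf, hfa⟩ := (all_card_le_biUnion_card_iff_exists_injective allowed).mp hall
  exact ⟨Equiv.ofBijective f hf.bijective_of_finite, fun a => by simpa [allowed] using hfa a⟩

namespace IsKN1Graph

variable {k n : ℕ} {G : SimpleGraph (Fin k × Fin n)}

theorem card_filter_adj_le_one {α : Type*} [Fintype α] [DecidableRel G.Adj] (hG : IsKN1Graph G)
    (u : Fin k × Fin n) (i : Fin k) {f : α → Fin n} (hf : Function.Injective f) :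
    #{a | G.Adj u (i, f a)} ≤ 1 :=
  card_le_one.mpr fun _ ha _ hb => by
    simp only [mem_filter, mem_univ, true_and] at ha hb
    exact hf (congrArg Prod.snd (hG.2 _ _ _ ha hb rfl))

theorem exists_perm_forall_not_adj (hG : IsKN1Graph G) {S : Finset (Fin k)} (hS : 2 * #S ≤ n)
    {T : Fin n → Fin k → Fin n} (hT : ∀ i ∈ S, Function.Injective fun m => T m i) (a : Fin k) :
    ∃ σ : Equiv.Perm (Fin n), ∀ m, ∀ i ∈ S, ¬ G.Adj (i, T m i) (a, σ m) := by
  classical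
  simpa using Equiv.Perm.exists_forall_not_of_card_le (by simpa using hS)
    (fun m y => ∃ i ∈ S, G.Adj (i, T m i) (a, y))
    (fun m => calc
      #{y | ∃ i ∈ S, G.Adj (i, T m i) (a, y)}
          ≤ #(S.biUnion fun i => {y | G.Adj (i, T m i) (a, y)}) :=
            card_le_card fun y => by simp
      _ ≤ #S * 1 := card_biUnion_le_card_mul _ _ _ fun i _ =>
            hG.card_filter_adj_le_one _ a Function.injective_id
      _ = #S := mul_one _)
    (fun y => calc
      #{m | ∃ i ∈ S, G.Adj (i, T m i) (a, y)}
          ≤ #(S.biUnion fun i => {m | G.Adj (a, y) (i, T m i)}) :=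
            card_le_card fun m => by simp [G.adj_comm]
      _ ≤ #S * 1 := card_biUnion_le_card_mul _ _ _ fun i hi =>
            hG.card_filter_adj_le_one _ i (hT i hi)
      _ = #S := mul_one _)

theorem exists_partial_factor (hG : IsKN1Graph G) (hn : 2 * (k - 1) ≤ n) (S : Finset (Fin k)) :
    ∃ T : Fin n → Fin k → Fin n,
      (∀ m, ∀ i ∈ S, ∀ j ∈ S, ¬ G.Adj (i, T m i) (j, T m j)) ∧
      ∀ i ∈ S, Function.Injective fun m => T m i := by
  classical
  induction S using Finset.induction_on with
  | empty => exact ⟨fun m _ => m, by simp, by simp⟩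
  | @insert a S haS ih =>
    obtain ⟨T, hT, hTinj⟩ := ih
    have hS : 2 * #S ≤ n := by
      have := card_le_univ (insert a S)
      rw [card_insert_of_notMem haS, Fintype.card_fin] at this
      omega
    obtain ⟨σ, hσ⟩ := hG.exists_perm_forall_not_adj hS hTinj a
    refine ⟨fun m => Function.update (T m) a (σ m), fun m i hi j hj => ?_, fun i hi => ?_⟩
    · have hσ' : ∀ j ∈ S, ¬ G.Adj (a, σ m) (j, T m j) := fun j hj h => hσ m j hj h.symm
      rcases mem_insert.mp hi with hi | hi <;> rcases mem_insert.mp hj with hj | hj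
      · subst i j
        exact G.irrefl
      · subst i
        simpa [Function.update_of_ne (ne_of_mem_of_not_mem hj haS)] using hσ' j hj
      · subst j
        simpa [Function.update_of_ne (ne_of_mem_of_not_mem hi haS), G.adj_comm] using hσ' i hi
      · simpa [Function.update_of_ne (ne_of_mem_of_not_mem hi haS),
          Function.update_of_ne (ne_of_mem_of_not_mem hj haS)] using hT m i hi j hj
    · rcases mem_insert.mp hi with hi | hi
      · subst i
        simpa using σ.injective
      · simpa [Function.update_of_ne (ne_of_mem_of_not_mem hi haS)] using hTinj i hi

theorem hasITFactor (hG : IsKN1Graph G) (hn : 2 * (k - 1) ≤ n) : HasITFactor G := by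
  obtain ⟨T, hT, hTinj⟩ := hG.exists_partial_factor hn univ
  exact ⟨T, fun m i j => hT m i (mem_univ i) j (mem_univ j), fun i => hTinj i (mem_univ i)⟩

end IsKN1Graph

def twistedMatchingGraph : SimpleGraph (Fin 3 × Fin 3) :=
  .fromRel fun u v => (u.1 = 0 ∧ u.2 = v.2) ∨ (u.1 = 1 ∧ v.1 = 2 ∧ v.2 = Equiv.swap 1 2 u.2)

instance : DecidableRel twistedMatchingGraph.Adj := fun u v =>
  inferInstanceAs (Decidable (u ≠ v ∧ (_ ∨ _)))

theorem isKN1Graph_twistedMatchingGraph : IsKN1Graph twistedMatchingGraph := by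
  unfold IsKN1Graph
  decide

theorem not_hasITFactor_twistedMatchingGraph : ¬ HasITFactor twistedMatchingGraph := by
  rintro ⟨T, hT, hinj⟩
  have : ¬ ∃ p q r : Fin 3 → Fin 3, p.Injective ∧ q.Injective ∧ r.Injective ∧ ∀ m,
      ¬ twistedMatchingGraph.Adj (0, p m) (1, q m) ∧
        ¬ twistedMatchingGraph.Adj (0, p m) (2, r m) ∧
        ¬ twistedMatchingGraph.Adj (1, q m) (2, r m) := by
    decide
  exact this ⟨(T · 0), (T · 1), (T · 2), hinj 0, hinj 1, hinj 2,
    fun m => ⟨hT m 0 1, hT m 0 2, hT m 1 2⟩⟩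

/-- `f(3) = 4`: every `[3,n,1]`-graph with `n ≥ 4` has a factor of independent
transversals, and there is a `[3,3,1]`-graph with no factor of independent transversals. -/
theorem stmt_7 :
    (∀ n : ℕ, 4 ≤ n → ∀ G : SimpleGraph (Fin 3 × Fin n), IsKN1Graph G → HasITFactor G) ∧
    (∃ G : SimpleGraph (Fin 3 × Fin 3), IsKN1Graph G ∧ ¬ HasITFactor G) :=
  ⟨fun _ hn _ hG => hG.hasITFactor (by omega),
    twistedMatchingGraph, isKN1Graph_twistedMatchingGraph, not_hasITFactor_twistedMatchingGraph⟩
end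

section
/- Let B be a bipartite graph with vertex parts X and Y, each of order m, and let t be an integer. Assume that every vertex of B has degree at least m−t, and furthermore that every subset W ⊆ Y with m−t ≤ |W| ≤ t satisfies |N_B(W)| ≥ |W|, where N_B(W) denotes the set of vertices of B having a neighbor in W. Then B has a perfect matching. -/
/-- Hall-type condition (Lemma 2.2 / `l:hall`): a bipartite graph with parts `X, Y` of
order `m` each (modeled as an adjacency relation `A : Fin m → Fin m → Prop`, where
`A i j` means `x_i y_j` is an edge), in which every vertex has degree at least `m − t`
and every `W ⊆ Y` with `m − t ≤ |W| ≤ t` satisfies `|N_B(W)| ≥ |W|`, has a perfect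
matching (a bijection `σ` with `x_i` matched to `y_{σ i}` along edges). -/
theorem stmt_9 (m : ℕ) (t : ℤ) (A : Fin m → Fin m → Prop)
    (hdegX : ∀ i : Fin m, (m : ℤ) - t ≤ ({j | A i j} : Set (Fin m)).ncard)
    (hdegY : ∀ j : Fin m, (m : ℤ) - t ≤ ({i | A i j} : Set (Fin m)).ncard)
    (hHall : ∀ W : Set (Fin m), (m : ℤ) - t ≤ (W.ncard : ℤ) → (W.ncard : ℤ) ≤ t →
      W.ncard ≤ ({i | ∃ j ∈ W, A i j} : Set (Fin m)).ncard) :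
    ∃ σ : Equiv.Perm (Fin m), ∀ i : Fin m, A i (σ i) := by
  classical
  set nbr : Fin m → Finset (Fin m) := fun j => ({i | A i j} : Set (Fin m)).toFinset with hnbr
  have hall : ∀ W : Finset (Fin m), W.card ≤ (W.biUnion nbr).card := by
    intro W
    have hbiU : ((W.biUnion nbr : Finset (Fin m)) : Set (Fin m)) =
        {i | ∃ j ∈ (W : Set (Fin m)), A i j} := by
      ext i
      simp [hnbr]
    rcases le_or_gt (W.card : ℤ) ((m : ℤ) - t) with h1 | h1
    · -- small W: use degree of any vertex in W
      rcases W.eq_empty_or_nonempty with rfl | ⟨j, hj⟩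
      · simp
      have hsub : nbr j ⊆ W.biUnion nbr := Finset.subset_biUnion_of_mem nbr hj
      have hdeg := hdegY j
      have hcard : ({i | A i j} : Set (Fin m)).ncard = (nbr j).card := by
        rw [hnbr]; exact Set.ncard_eq_toFinset_card' _
      have : (W.card : ℤ) ≤ ((nbr j).card : ℤ) := by
        rw [hcard] at hdeg; omega
      have h2 : ((nbr j).card : ℤ) ≤ ((W.biUnion nbr).card : ℤ) := by
        exact_mod_cast Finset.card_le_card hsub
      exact_mod_cast this.trans h2
    rcases le_or_gt (W.card : ℤ) t with h2 | h2
    · -- middle range: use hHall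
      have := hHall (W : Set (Fin m)) (by rw [Set.ncard_coe_finset]; omega)
        (by rw [Set.ncard_coe_finset]; exact_mod_cast h2)
      rw [Set.ncard_coe_finset, ← hbiU, Set.ncard_coe_finset] at this
      exact this
    · -- large W: every x has a neighbor in W
      have huniv : W.biUnion nbr = Finset.univ := by
        apply Finset.eq_univ_of_forall
        intro i
        have hdeg := hdegX i
        have hcard : ({j | A i j} : Set (Fin m)).ncard =
            ({j | A i j} : Set (Fin m)).toFinset.card := Set.ncard_eq_toFinset_card' _
        set S := ({j | A i j} : Set (Fin m)).toFinset with hS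
        have hcap : (S ∩ W).Nonempty := by
          rw [← Finset.card_pos]
          have hle : (S ∪ W).card ≤ m := by
            simpa using Finset.card_le_card (Finset.subset_univ (S ∪ W))
          have := Finset.card_inter_add_card_union S W
          rw [hcard] at hdeg
          omega
        obtain ⟨j, hj⟩ := hcap
        obtain ⟨hjS, hjW⟩ := Finset.mem_inter.mp hj
        refine Finset.mem_biUnion.mpr ⟨j, hjW, ?_⟩
        simp only [hnbr, Set.mem_toFinset, Set.mem_setOf_eq]
        rw [hS] at hjS
        exact Set.mem_toFinset.mp hjS
      calc W.card ≤ m := by simpa using Finset.card_le_card (Finset.subset_univ W)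
        _ = (W.biUnion nbr).card := by simp [huniv]
  obtain ⟨f, hfinj, hf⟩ := (Finset.all_card_le_biUnion_card_iff_exists_injective nbr).mp hall
  have hfbij : Function.Bijective f := (Finite.injective_iff_bijective).mp hfinj
  refine ⟨(Equiv.ofBijective f hfbij).symm, fun i => ?_⟩
  have hA : ∀ j, A (f j) j := by
    intro j
    have := hf j
    simpa [hnbr, Set.mem_toFinset] using this
  have : f ((Equiv.ofBijective f hfbij).symm i) = i :=
    (Equiv.ofBijective f hfbij).apply_symm_apply i
  have h := hA ((Equiv.ofBijective f hfbij).symm i)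
  rwa [this] at h
end

section
/- For every δ > 0 there exists a constant C > 0 such that the following holds for all positive integers n and all 0 ≤ t ≤ n. Let B be a bipartite graph with vertex parts X = {x_1,…,x_n} and Y = {y_1,…,y_n} in which every vertex of X has degree exactly n−t, and let X* ⊆ X and Y* ⊆ Y be given subsets. If π is a uniformly random permutation of {1,…,n}, then with probability at least 1 − C/n, the number of indices i ∈ {1,…,n} such that x_i ∈ X*, y_{π(i)} ∈ Y*, and x_i y_{π(i)} is an edge of B is at least |X*|(|Y*|−t)/n − δn. -/
/-!
Second moment method. Put `G i = Y* ∩ N(x_i)` and let `F(π)` count the `i ∈ X*` with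
`π i ∈ G i`. Since `π i` is uniform on `Fin n`, `𝔼 F = T / n` with `T = ∑_{i ∈ X*} |G i|`,
and the degree condition gives `T ≥ |X*| (|Y*| - t)`. For `i ≠ i'` the pair `(π i, π i')` is
uniform on pairs of distinct elements, so `𝔼 F² ≤ T / n + T² / (n (n - 1))`, whence
`Var F ≤ 3 n`. Chebyshev's inequality bounds the probability that `F < T / n - δ n` by
`3 / (δ² n)`.
-/

open Finset Equiv
open scoped Nat

theorem Nat.mul_factorial_sub_one_le (k : ℕ) : k * (k - 1)! ≤ k ! := by
  rcases k with _ | k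
  · simp
  · exact (Nat.mul_factorial_pred k.succ_ne_zero).le

theorem Nat.succ_mul_factorial_sub_one_le (k : ℕ) : (k + 1) * (k - 1)! ≤ 2 * k ! := by
  rcases k with _ | k
  · simp
  · rw [← Nat.mul_factorial_pred k.succ_ne_zero]
    nlinarith [Nat.factorial_pos k]

theorem Finset.card_add_card_le_card_inter_add_card_univ {α : Type*} [Fintype α]
    [DecidableEq α] (s u : Finset α) : #s + #u ≤ #(s ∩ u) + Fintype.card α := by
  have := card_union_add_card_inter s u
  have := card_le_univ (s ∪ u)
  omega

theorem Finset.sum_card_le_card_sq {α ι : Type*} [Fintype α] (X : Finset ι)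
    (G : ι → Finset α) (hX : #X ≤ Fintype.card α) :
    ∑ i ∈ X, #(G i) ≤ Fintype.card α ^ 2 :=
  calc ∑ i ∈ X, #(G i) ≤ #X * Fintype.card α :=
        sum_le_card_nsmul X _ _ fun i _ => card_le_univ (G i)
    _ ≤ Fintype.card α ^ 2 := by
        rw [sq]
        exact Nat.mul_le_mul_right _ hX

theorem Finset.sum_sub_sq_of_sum_eq {ι : Type*} (s : Finset ι) (f : ι → ℝ) {m : ℝ}
    (hm : ∑ x ∈ s, f x = #s * m) :
    ∑ x ∈ s, (f x - m) ^ 2 = ∑ x ∈ s, f x ^ 2 - #s * m ^ 2 := by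
  simp only [sub_sq, sum_add_distrib, sum_sub_distrib, ← sum_mul, ← mul_sum, sum_const,
    nsmul_eq_mul, hm]
  ring

theorem Finset.card_filter_lt_sub_mul_sq_le {ι : Type*} (s : Finset ι) (f : ι → ℝ) (m : ℝ)
    {ε : ℝ} (hε : 0 ≤ ε) :
    #{x ∈ s | f x < m - ε} * ε ^ 2 ≤ ∑ x ∈ s, (f x - m) ^ 2 := by
  calc (#{x ∈ s | f x < m - ε} : ℝ) * ε ^ 2 = ∑ x ∈ s with f x < m - ε, ε ^ 2 := by
        rw [sum_const, nsmul_eq_mul]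
    _ ≤ ∑ x ∈ s with f x < m - ε, (f x - m) ^ 2 := sum_le_sum fun x hx => by
        have := (mem_filter.1 hx).2
        nlinarith
    _ ≤ ∑ x ∈ s, (f x - m) ^ 2 :=
        sum_le_sum_of_subset_of_nonneg (filter_subset _ _) fun _ _ _ => sq_nonneg _

namespace Equiv.Perm

variable {α : Type*} [DecidableEq α]

theorem card_filter_apply_eq_of_swap_mul_mem {s : Finset (Perm α)} {c c' : α}
    (hs : ∀ π ∈ s, swap c c' * π ∈ s) (a : α) :
    #{π ∈ s | π a = c} = #{π ∈ s | π a = c'} := by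
  refine card_nbij' (swap c c' * ·) (swap c c' * ·) ?_ ?_ ?_ ?_ <;> intro π hπ <;>
    simp_all [← mul_assoc]

variable [Fintype α]

theorem card_filter_apply_eq (a b : α) :
    #{π : Perm α | π a = b} = (Fintype.card α - 1)! := by
  have hn : 0 < Fintype.card α := Fintype.card_pos_iff.2 ⟨a⟩
  have hfib : ∀ c, #{π : Perm α | π a = c} = #{π : Perm α | π a = b} := fun c =>
    card_filter_apply_eq_of_swap_mul_mem (fun _ _ => mem_univ _) a
  have := card_eq_sum_card_fiberwise (f := fun π : Perm α => π a) (s := univ) (t := univ)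
    fun _ _ => mem_univ _
  rw [Finset.card_univ, Fintype.card_perm, ← Nat.mul_factorial_pred hn.ne'] at this
  simp only [hfib, sum_const, Finset.card_univ, smul_eq_mul] at this
  exact (Nat.eq_of_mul_eq_mul_left hn this).symm

theorem card_filter_apply_eq_and_apply_eq {a a' b b' : α} (ha : a ≠ a') (hb : b' ≠ b) :
    #{π : Perm α | π a = b ∧ π a' = b'} = (Fintype.card α - 2)! := by
  set s : Finset (Perm α) := {π | π a = b}
  have hfib : ∀ c ∈ univ.erase b, #{π ∈ s | π a' = c} = #{π ∈ s | π a' = b'} := fun c hc =>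
    card_filter_apply_eq_of_swap_mul_mem (fun π hπ => by
      simp_all [s, swap_apply_of_ne_of_ne (ne_of_mem_erase hc).symm hb.symm]) a'
  have hzero : #{π ∈ s | π a' = b} = 0 := by
    rw [Finset.card_eq_zero, filter_eq_empty_iff]
    intro π hπ h
    exact ha (π.injective ((mem_filter.1 hπ).2.trans h.symm))
  have hs := card_eq_sum_card_fiberwise (f := fun π : Perm α => π a') (s := s) (t := univ)
    fun _ _ => mem_univ _
  rw [← add_sum_erase _ _ (mem_univ b), hzero, zero_add, sum_congr rfl hfib, sum_const,
    card_erase_of_mem (mem_univ b), Finset.card_univ, smul_eq_mul, filter_filter,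
    card_filter_apply_eq] at hs
  have hn : 0 < Fintype.card α - 1 := by
    have := Fintype.one_lt_card_iff.2 ⟨a, a', ha⟩
    omega
  rw [← Nat.mul_factorial_pred hn.ne', Nat.sub_sub] at hs
  exact (Nat.eq_of_mul_eq_mul_left hn hs).symm

theorem card_filter_apply_mem (a : α) (S : Finset α) :
    #{π : Perm α | π a ∈ S} = #S * (Fintype.card α - 1)! := by
  rw [card_eq_sum_card_fiberwise (f := fun π : Perm α => π a) (s := {π | π a ∈ S}) (t := S)
    fun _ h => (mem_filter.1 h).2, ← smul_eq_mul, ← sum_const]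
  refine sum_congr rfl fun b hb => ?_
  rw [filter_filter, ← card_filter_apply_eq a b]
  congr 1
  exact filter_congr fun π _ => ⟨And.right, fun h => ⟨h ▸ hb, h⟩⟩

theorem card_filter_apply_mem_and_apply_mem_le {a a' : α} (ha : a ≠ a') (S S' : Finset α) :
    #{π : Perm α | π a ∈ S ∧ π a' ∈ S'} ≤ #S * #S' * (Fintype.card α - 2)! := by
  rw [card_eq_sum_card_fiberwise (f := fun π : Perm α => (π a, π a'))
    (s := {π | π a ∈ S ∧ π a' ∈ S'}) (t := S ×ˢ S')
    fun _ h => mem_product.2 (mem_filter.1 h).2, ← card_product, ← smul_eq_mul, ← sum_const]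
  refine sum_le_sum fun p _ => ?_
  calc #{π ∈ {π : Perm α | π a ∈ S ∧ π a' ∈ S'} | (π a, π a') = p}
      ≤ #{π : Perm α | π a = p.1 ∧ π a' = p.2} :=
        card_le_card fun π => by simp +contextual [Prod.ext_iff]
    _ ≤ (Fintype.card α - 2)! := by
        rcases eq_or_ne p.2 p.1 with hp | hp
        · rw [hp, Finset.card_eq_zero.2 (filter_eq_empty_iff.2 fun π _ h =>
            ha (π.injective (h.1.trans h.2.symm)))]
          exact Nat.zero_le _
        · exact (card_filter_apply_eq_and_apply_eq ha hp).le

def matchCount (X : Finset α) (G : α → Finset α) (π : Perm α) : ℕ := #{i ∈ X | π i ∈ G i}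

theorem sum_matchCount (X : Finset α) (G : α → Finset α) :
    ∑ π : Perm α, matchCount X G π = (∑ i ∈ X, #(G i)) * (Fintype.card α - 1)! := by
  simp only [matchCount, card_filter]
  rw [sum_comm, sum_mul]
  refine sum_congr rfl fun i _ => ?_
  rw [← card_filter, card_filter_apply_mem]

theorem sum_matchCount_sq_le (X : Finset α) (G : α → Finset α) :
    ∑ π : Perm α, matchCount X G π ^ 2 ≤
      (∑ i ∈ X, #(G i)) * (Fintype.card α - 1)! +
        (∑ i ∈ X, #(G i)) ^ 2 * (Fintype.card α - 2)! := by
  have hpair : ∀ i i', #{π : Perm α | π i ∈ G i ∧ π i' ∈ G i'} ≤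
      (if i' = i then #(G i) * (Fintype.card α - 1)! else 0) +
        #(G i) * #(G i') * (Fintype.card α - 2)! := by
    intro i i'
    rcases eq_or_ne i' i with rfl | hi
    · simp [card_filter_apply_mem]
    · simpa [hi] using card_filter_apply_mem_and_apply_mem_le hi.symm (G i) (G i')
  calc ∑ π : Perm α, matchCount X G π ^ 2
      = ∑ i ∈ X, ∑ i' ∈ X, #{π : Perm α | π i ∈ G i ∧ π i' ∈ G i'} := by
        simp only [matchCount, card_filter, sq, sum_mul_sum, ite_zero_mul_ite_zero, mul_one]
        rw [sum_comm]
        exact sum_congr rfl fun i _ => sum_comm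
    _ ≤ ∑ i ∈ X, ∑ i' ∈ X, ((if i' = i then #(G i) * (Fintype.card α - 1)! else 0) +
          #(G i) * #(G i') * (Fintype.card α - 2)!) :=
        sum_le_sum fun i _ => sum_le_sum fun i' _ => hpair i i'
    _ = _ := by
        simp only [sum_add_distrib, sum_ite_eq', sum_ite_mem, inter_self, ← sum_mul, ← mul_sum,
          sq]

theorem sum_sq_matchCount_sub_le [Nonempty α] (X : Finset α) (G : α → Finset α) :
    ∑ π : Perm α, ((matchCount X G π : ℝ) - (∑ i ∈ X, #(G i) : ℕ) / Fintype.card α) ^ 2 ≤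
      3 * Fintype.card α * (Fintype.card α)! := by
  obtain ⟨k, hk⟩ : ∃ k, Fintype.card α = k + 1 := Nat.exists_eq_add_one.2 Fintype.card_pos
  set T := ∑ i ∈ X, #(G i)
  have hT : (T : ℝ) ≤ (k + 1) ^ 2 := by
    exact_mod_cast hk ▸ sum_card_le_card_sq X G (card_le_univ X)
  have hn : (0 : ℝ) < k + 1 := by positivity
  have hsum : ∑ π : Perm α, (matchCount X G π : ℝ) =
      #(univ : Finset (Perm α)) * (T / (k + 1)) := by
    have := sum_matchCount X G
    rw [hk, Nat.add_sub_cancel] at this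
    rw [card_univ, Fintype.card_perm, hk, Nat.factorial_succ, Nat.cast_mul, Nat.cast_add_one,
      mul_comm, ← mul_assoc, div_mul_cancel₀ _ hn.ne']
    exact_mod_cast this
  have hsq : ∑ π : Perm α, (matchCount X G π : ℝ) ^ 2 ≤ T * k ! + T ^ 2 * (k - 1)! := by
    have := sum_matchCount_sq_le X G
    rw [hk, Nat.add_sub_cancel, show k + 1 - 2 = k - 1 by omega] at this
    exact_mod_cast this
  have hfac₁ : (k : ℝ) * (k - 1)! ≤ k ! := by exact_mod_cast k.mul_factorial_sub_one_le
  have hfac₂ : ((k : ℝ) + 1) * (k - 1)! ≤ 2 * k ! := by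
    exact_mod_cast k.succ_mul_factorial_sub_one_le
  rw [hk, Nat.cast_add_one, sum_sub_sq_of_sum_eq _ _ hsum, card_univ, Fintype.card_perm, hk,
    Nat.factorial_succ, Nat.cast_mul, Nat.cast_add_one, sub_le_iff_le_add]
  have key : ((T : ℝ) * k ! + T ^ 2 * (k - 1)! - 3 * (k + 1) * ((k + 1) * k !)) * (k + 1) ≤
      T ^ 2 * k ! := by
    have hT₀ : (0 : ℝ) ≤ T := T.cast_nonneg
    have hf₁ : (0 : ℝ) ≤ k ! := by positivity
    have hf₂ : (0 : ℝ) ≤ (k - 1)! := by positivity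
    nlinarith [mul_le_mul_of_nonneg_left hfac₁ (sq_nonneg (T : ℝ)),
      mul_le_mul_of_nonneg_right hT hf₁, mul_le_mul_of_nonneg_right
      (pow_le_pow_left₀ hT₀ hT 2) hf₂, mul_le_mul_of_nonneg_left hfac₂ (pow_nonneg hn.le 3)]
  have hmean_sq : ((k : ℝ) + 1) * k ! * (T / (k + 1)) ^ 2 = T ^ 2 * k ! / (k + 1) := by
    field_simp
  linarith [(le_div_iff₀ hn).2 key]

theorem card_filter_matchCount_lt_mul_sq_le [Nonempty α] (X : Finset α) (G : α → Finset α)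
    {ε : ℝ} (hε : 0 ≤ ε) :
    #{π : Perm α | (matchCount X G π : ℝ) <
        (∑ i ∈ X, #(G i) : ℕ) / Fintype.card α - ε} * ε ^ 2 ≤
      3 * Fintype.card α * (Fintype.card α)! :=
  (Finset.card_filter_lt_sub_mul_sq_le _ _ _ hε).trans (sum_sq_matchCount_sub_le X G)

theorem card_filter_le_matchCount_ge [Nonempty α] (X : Finset α) (G : α → Finset α)
    {δ μ : ℝ} (hδ : 0 < δ) (hμ : μ ≤ ∑ i ∈ X, #(G i)) :
    (1 - 3 / δ ^ 2 / Fintype.card α) * (Fintype.card α)! ≤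
      #{π : Perm α | μ / Fintype.card α - δ * Fintype.card α ≤ matchCount X G π} := by
  set n := Fintype.card α
  have hn : (0 : ℝ) < n := by exact_mod_cast Fintype.card_pos
  set good : Finset (Perm α) := {π | μ / n - δ * n ≤ matchCount X G π}
  set bad : Finset (Perm α) := {π | (matchCount X G π : ℝ) < (∑ i ∈ X, #(G i) : ℕ) / n - δ * n}
  have hsplit : (#good : ℝ) + #{π : Perm α | ¬μ / n - δ * n ≤ matchCount X G π} = n ! := by
    exact_mod_cast (card_filter_add_card_filter_not _).trans (Fintype.card_perm (α := α))
  have hsub : #{π : Perm α | ¬μ / n - δ * n ≤ matchCount X G π} ≤ #bad :=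
    card_le_card fun π hπ => by
      simp only [bad, mem_filter, mem_univ, true_and, not_le] at hπ ⊢
      exact hπ.trans_le (by gcongr)
  have hbad : (#bad : ℝ) ≤ 3 / δ ^ 2 / n * n ! := by
    rw [show 3 / δ ^ 2 / n * n ! = 3 * n * n ! / (δ * n) ^ 2 by field_simp,
      le_div_iff₀ (by positivity)]
    exact card_filter_matchCount_lt_mul_sq_le X G (by positivity)
  have : (#{π : Perm α | ¬μ / n - δ * n ≤ matchCount X G π} : ℝ) ≤ #bad := by
    exact_mod_cast hsub
  linarith

end Equiv.Perm

/-- Lemma 2.3(ii) (`l:rand-match`): for every `δ > 0` there is `C > 0` such that for every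
bipartite graph with parts `X = {x_1,…,x_n}`, `Y = {y_1,…,y_n}` (adjacency relation
`A i j`) in which every vertex of `X` has degree exactly `n − t` (`0 ≤ t ≤ n`), and every
`X* ⊆ X`, `Y* ⊆ Y`, a uniformly random permutation `π` satisfies, with probability at
least `1 − C/n` (i.e., for at least `(1 − C/n)·n!` of the `n!` permutations), that the
number of indices `i` with `x_i ∈ X*`, `y_{π(i)} ∈ Y*` and `x_i y_{π(i)}` an edge is at
least `|X*|(|Y*| − t)/n − δn`. -/
theorem stmt_11 (δ : ℝ) (hδ : 0 < δ) :
    ∃ C : ℝ, 0 < C ∧ ∀ n t : ℕ, 0 < n → t ≤ n →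
      ∀ A : Fin n → Fin n → Prop,
        (∀ i : Fin n, ({j | A i j} : Set (Fin n)).ncard = n - t) →
        ∀ Xs Ys : Set (Fin n),
          (1 - C / n) * (Nat.factorial n) ≤
            (({π : Equiv.Perm (Fin n) |
                (Xs.ncard : ℝ) * ((Ys.ncard : ℝ) - t) / n - δ * n ≤
                  (({i | i ∈ Xs ∧ π i ∈ Ys ∧ A i (π i)} : Set (Fin n)).ncard : ℝ)} :
              Set (Equiv.Perm (Fin n))).ncard : ℝ) := by
  classical
  refine ⟨3 / δ ^ 2, by positivity, fun n t hn ht A hA Xs Ys => ?_⟩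
  have : Nonempty (Fin n) := ⟨⟨0, hn⟩⟩
  set G : Fin n → Finset (Fin n) := fun i => Ys.toFinset ∩ {j | A i j}.toFinset
  have hdeg : ∀ i, (Ys.ncard : ℝ) - t ≤ #(G i) := fun i => by
    have := card_add_card_le_card_inter_add_card_univ Ys.toFinset {j | A i j}.toFinset
    rw [← Set.ncard_eq_toFinset_card', ← Set.ncard_eq_toFinset_card', hA i,
      Fintype.card_fin] at this
    rw [sub_le_iff_le_add]
    exact_mod_cast (by simp only [G]; omega : Ys.ncard ≤ #(G i) + t)
  have hmean : (Xs.ncard : ℝ) * ((Ys.ncard : ℝ) - t) ≤ ∑ i ∈ Xs.toFinset, #(G i) := by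
    rw [Set.ncard_eq_toFinset_card', ← nsmul_eq_mul, ← sum_const, Nat.cast_sum]
    exact sum_le_sum fun i _ => hdeg i
  have hcount : ∀ π : Perm (Fin n), ({i | i ∈ Xs ∧ π i ∈ Ys ∧ A i (π i)} : Set (Fin n)).ncard =
      Perm.matchCount Xs.toFinset G π := fun π => by
    rw [Set.ncard_eq_toFinset_card', Perm.matchCount]
    congr 1
    ext i
    simp only [G, mem_filter, Set.mem_toFinset, mem_inter, Set.mem_ofPred_eq]
  have key := Perm.card_filter_le_matchCount_ge Xs.toFinset G hδ hmean
  rw [Fintype.card_fin] at key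
  simp_rw [hcount, Set.ncard_eq_toFinset_card' {π : Perm (Fin n) | _}, Set.toFinset_ofPred]
  exact key
end

section
/- Let c be a real number with 0 < c ≤ 1 satisfying 2c²·ln((1+c)/c) ≥ 1. Then for every real μ with 0 ≤ μ ≤ 1/(1+c), the definite integral ∫₀^μ [1 − (1 − cμ − x)(1 − cx/(1−x))] dx is at most cμ. -/
/-! For `x < 1` the integrand equals `cμ + c²μ + (1+c)x − c²μ/(1−x)`, so the integral is
`μ · ((c + c² + (1+c)/2) μ + c² ln(1−μ))`. Bounding `ln(1−μ)` by its tangent line at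
`μ = 1/(1+c)`, i.e. `ln(1−μ) ≤ (1−μ)(1+c)/c − 1 − ln((1+c)/c)`, the bracket is at most
`c + (1+c)μ/2 − c² ln((1+c)/c) ≤ c + 1/2 − c² ln((1+c)/c)`, which is `≤ c` since
`2c² ln((1+c)/c) ≥ 1`. -/

open Real

lemma Real.log_le_div_sub_one_add_log {y t : ℝ} (hy : 0 < y) (ht : 0 < t) :
    log y ≤ y / t - 1 + log t := by
  have := log_le_sub_one_of_pos (div_pos hy ht)
  rw [log_div hy.ne' ht.ne'] at this
  linarith

lemma hasDerivAt_integrand_primitive (c μ : ℝ) {x : ℝ} (hx : x < 1) :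
    HasDerivAt (fun x => (c * μ + c ^ 2 * μ) * x + (1 + c) * x ^ 2 / 2 + c ^ 2 * μ * log (1 - x))
      (1 - (1 - c * μ - x) * (1 - c * x / (1 - x))) x := by
  have hx' : 1 - x ≠ 0 := by linarith
  have hlog : HasDerivAt (fun x => log (1 - x)) (-1 / (1 - x)) x := by
    simpa using ((hasDerivAt_id x).const_sub 1).log hx'
  refine ((((hasDerivAt_id' x).const_mul (c * μ + c ^ 2 * μ)).add
    (((hasDerivAt_pow 2 x).const_mul (1 + c)).div_const 2)).add
      (hlog.const_mul (c ^ 2 * μ))).congr_deriv ?_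
  field_simp
  ring

lemma integral_integrand_eq (c : ℝ) {μ : ℝ} (hμ : μ < 1) :
    ∫ x in (0 : ℝ)..μ, (1 - (1 - c * μ - x) * (1 - c * x / (1 - x))) =
      μ * ((c + c ^ 2 + (1 + c) / 2) * μ + c ^ 2 * log (1 - μ)) := by
  have hlt : ∀ x ∈ Set.uIcc 0 μ, x < 1 := fun x hx =>
    (Set.mem_uIcc.mp hx).elim (fun h => by linarith [h.2]) (fun h => by linarith [h.2])
  rw [intervalIntegral.integral_eq_sub_of_hasDerivAt
    (fun x hx => hasDerivAt_integrand_primitive c μ (hlt x hx))]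
  · simp only [mul_zero, zero_add, ne_eq, OfNat.ofNat_ne_zero, not_false_eq_true, zero_pow,
      zero_div, sub_zero, log_one]
    ring
  · refine ContinuousOn.intervalIntegrable fun x hx => ?_
    have : 1 - x ≠ 0 := by linarith [hlt x hx]
    fun_prop (disch := assumption)

theorem stmt_13_general (c : ℝ) (hc0 : 0 < c)
    (hc : 1 ≤ 2 * c ^ 2 * Real.log ((1 + c) / c))
    (μ : ℝ) (hμ0 : 0 ≤ μ) (hμ1 : μ ≤ 1 / (1 + c)) :
    (∫ x in (0 : ℝ)..μ, (1 - (1 - c * μ - x) * (1 - c * x / (1 - x)))) ≤ c * μ := by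
  have hμc : (1 + c) * μ ≤ 1 := (le_div_iff₀' (by linarith)).mp hμ1
  have hμ : μ < 1 := by nlinarith
  have htangent : log (1 - μ) ≤ (1 - μ) * (1 + c) / c - 1 - log ((1 + c) / c) := by
    have := log_le_div_sub_one_add_log (sub_pos.mpr hμ) (t := c / (1 + c)) (by positivity)
    rw [div_div_eq_mul_div, ← neg_neg (log (c / (1 + c))), ← log_inv, inv_div] at this
    linarith
  have hscaled : c ^ 2 * ((1 - μ) * (1 + c) / c) = c * (1 + c) * (1 - μ) := by
    field_simp
  have hbracket : (c + c ^ 2 + (1 + c) / 2) * μ + c ^ 2 * log (1 - μ) ≤ c := by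
    nlinarith [mul_le_mul_of_nonneg_left htangent (sq_nonneg c), hscaled]
  rw [integral_integrand_eq c hμ, mul_comm c]
  exact mul_le_mul_of_nonneg_left hbracket hμ0

/-- Lemma 2.5 (`l:integeral`), first part: if `0 < c ≤ 1` satisfies
`2c² ln((1+c)/c) ≥ 1`, then for every `0 ≤ μ ≤ 1/(1+c)`,
`∫₀^μ [1 − (1 − cμ − x)(1 − cx/(1−x))] dx ≤ cμ`. -/
theorem stmt_13 (c : ℝ) (hc0 : 0 < c) (hc1 : c ≤ 1)
    (hc : 1 ≤ 2 * c ^ 2 * Real.log ((1 + c) / c))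
    (μ : ℝ) (hμ0 : 0 ≤ μ) (hμ1 : μ ≤ 1 / (1 + c)) :
    (∫ x in (0 : ℝ)..μ, (1 - (1 - c * μ - x) * (1 - c * x / (1 - x)))) ≤ c * μ :=
  stmt_13_general c hc0 hc μ hμ0 hμ1
end

section
/- Let c be a real number with 0 < c ≤ 1 satisfying 2c²·ln((1+c)/c) ≥ 1. Then for every ε > 0 there exists γ > 0 such that for every real μ with 0 ≤ μ ≤ (1−ε)/(1+c), the definite integral ∫₀^μ [1 − (1 − cμ − x)(1 − cx/(1−x))] dx is at most (c−γ)μ. -/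
/-!
The integral equals `μ * meanValue c μ` with
`meanValue c μ = (1 + c)(c + 1/2) μ + c² log (1 - μ)`.
On `[0, 1/(1+c)]` we have `c² / (1 - μ) ≤ c (1 + c)`, so `meanValue c` grows with slope at least
`(1 + c) / 2` there, while the hypothesis on `c` says exactly `meanValue c (1/(1+c)) ≤ c`.
Hence `meanValue c μ ≤ c - ε / 2` whenever `μ ≤ (1 - ε)/(1 + c)`.
-/

open Real intervalIntegral Set MeasureTheory

noncomputable def meanValue (c μ : ℝ) : ℝ := (1 + c) * (c + 1 / 2) * μ + c ^ 2 * log (1 - μ)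

theorem integral_eq_mul_meanValue (c μ : ℝ) (hμ0 : 0 ≤ μ) (hμ1 : μ < 1) :
    (∫ x in (0 : ℝ)..μ, (1 - (1 - c * μ - x) * (1 - c * x / (1 - x)))) =
      μ * meanValue c μ := by
  have hpos : ∀ x ∈ uIcc 0 μ, 0 < 1 - x := fun x hx => by
    rw [uIcc_of_le hμ0] at hx; linarith [hx.2]
  let F : ℝ → ℝ := fun x =>
    (c * μ + c ^ 2 * μ) * x + (1 + c) * x ^ 2 / 2 + c ^ 2 * μ * log (1 - x)
  have hderiv : ∀ x ∈ uIcc 0 μ,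
      HasDerivAt F (1 - (1 - c * μ - x) * (1 - c * x / (1 - x))) x := by
    intro x hx
    have hx1 := (hpos x hx).ne'
    have hlog := ((hasDerivAt_id x).const_sub 1).log hx1
    have hquad := ((hasDerivAt_pow 2 x).const_mul (1 + c)).div_const 2
    refine ((((hasDerivAt_id x).const_mul _).add hquad).add
      (hlog.const_mul (c ^ 2 * μ))).congr_deriv ?_
    simp only [id]
    field_simp
    ring
  have hint :
      IntervalIntegrable (fun x => 1 - (1 - c * μ - x) * (1 - c * x / (1 - x))) volume 0 μ :=
    ContinuousOn.intervalIntegrable (by fun_prop (disch := exact fun x hx => (hpos x hx).ne'))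
  rw [integral_eq_sub_of_hasDerivAt hderiv hint]
  simp only [F, meanValue, sub_zero, log_one]
  ring

theorem meanValue_add_le (c x y : ℝ) (hc : 0 < c) (hxy : x ≤ y)
    (hy : y ≤ 1 / (1 + c)) : meanValue c x + (1 + c) / 2 * (y - x) ≤ meanValue c y := by
  have h1c : 0 < 1 + c := by linarith
  have hy1 : 0 < 1 - y := by
    have : 1 / (1 + c) < 1 := by rw [div_lt_one h1c]; linarith
    linarith
  have hx1 : 0 < 1 - x := by linarith
  have hlog : log (1 - x) - log (1 - y) ≤ (y - x) / (1 - y) := by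
    rw [← log_div hx1.ne' hy1.ne']
    calc log ((1 - x) / (1 - y))
        ≤ (1 - x) / (1 - y) - 1 := log_le_sub_one_of_pos (by positivity)
      _ = (y - x) / (1 - y) := by field_simp; ring
  have hinv : c / (1 - y) ≤ 1 + c := by
    rw [div_le_iff₀ hy1]
    rw [le_div_iff₀ h1c] at hy
    nlinarith
  have hlog_bound : c ^ 2 * (log (1 - x) - log (1 - y)) ≤ c * (1 + c) * (y - x) := by
    calc c ^ 2 * (log (1 - x) - log (1 - y)) ≤ c ^ 2 * ((y - x) / (1 - y)) :=
          mul_le_mul_of_nonneg_left hlog (by positivity)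
      _ = c * (y - x) * (c / (1 - y)) := by ring
      _ ≤ c * (y - x) * (1 + c) := mul_le_mul_of_nonneg_left hinv (by nlinarith)
      _ = c * (1 + c) * (y - x) := by ring
  unfold meanValue
  nlinarith

theorem meanValue_inv_one_add_le (c : ℝ) (hc0 : 0 < c)
    (hc : 1 ≤ 2 * c ^ 2 * log ((1 + c) / c)) : meanValue c (1 / (1 + c)) ≤ c := by
  have h1c : 0 < 1 + c := by linarith
  have hsub : 1 - 1 / (1 + c) = ((1 + c) / c)⁻¹ := by field_simp; ring
  rw [meanValue, hsub, log_inv]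
  field_simp
  linarith

theorem stmt_14_general (c : ℝ) (hc0 : 0 < c)
    (hc : 1 ≤ 2 * c ^ 2 * Real.log ((1 + c) / c)) :
    ∀ ε : ℝ, 0 < ε → ∃ γ : ℝ, 0 < γ ∧
      ∀ μ : ℝ, 0 ≤ μ → μ ≤ (1 - ε) / (1 + c) →
        (∫ x in (0 : ℝ)..μ, (1 - (1 - c * μ - x) * (1 - c * x / (1 - x)))) ≤ (c - γ) * μ := by
  intro ε hε
  refine ⟨ε / 2, half_pos hε, fun μ hμ0 hμ => ?_⟩
  have h1c : 0 < 1 + c := by linarith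
  have hμc : (1 + c) * μ ≤ 1 - ε := by rwa [le_div_iff₀' h1c] at hμ
  have hμ_le : μ ≤ 1 / (1 + c) := by rw [le_div_iff₀' h1c]; linarith
  have hμ1 : μ < 1 := by nlinarith
  have hgap : ε / 2 ≤ (1 + c) / 2 * (1 / (1 + c) - μ) := by
    field_simp
    linarith
  have hmean : meanValue c μ ≤ c - ε / 2 := by
    linarith [meanValue_add_le c μ _ hc0 hμ_le le_rfl, meanValue_inv_one_add_le c hc0 hc]
  rw [integral_eq_mul_meanValue c μ hμ0 hμ1, mul_comm (c - ε / 2)]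
  exact mul_le_mul_of_nonneg_left hmean hμ0

/-- Lemma 2.5 (`l:integeral`), second part: if `0 < c ≤ 1` satisfies
`2c² ln((1+c)/c) ≥ 1`, then for every `ε > 0` there exists `γ > 0` such that for every
`0 ≤ μ ≤ (1−ε)/(1+c)`, `∫₀^μ [1 − (1 − cμ − x)(1 − cx/(1−x))] dx ≤ (c−γ)μ`. -/
theorem stmt_14 (c : ℝ) (hc0 : 0 < c) (hc1 : c ≤ 1)
    (hc : 1 ≤ 2 * c ^ 2 * Real.log ((1 + c) / c)) :
    ∀ ε : ℝ, 0 < ε → ∃ γ : ℝ, 0 < γ ∧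
      ∀ μ : ℝ, 0 ≤ μ → μ ≤ (1 - ε) / (1 + c) →
        (∫ x in (0 : ℝ)..μ, (1 - (1 - c * μ - x) * (1 - c * x / (1 - x)))) ≤ (c - γ) * μ :=
  stmt_14_general c hc0 hc
end
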